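/- Degenerate (rectilinear) case: if a Kepler solution r : I → ℝ³ satisfies h(t₀) = r(t₀) × ṙ(t₀) = 0 for some t₀ ∈ I, then the normalized position r(t)/|r(t)| is constant on I; equivalently, e(t) = −r(t)/|r(t)| for all t ∈ I and the trajectory is contained in the line through the origin with direction r(t₀)/|r(t₀)|. -/

import Mathlib

open scoped InnerProductSpace

/-- Cross product in ℝ³ (modelled as `EuclideanSpace ℝ (Fin 3)`). -/
noncomputable def cross3 (a b : EuclideanSpace ℝ (Fin 3)) : EuclideanSpace ℝ (Fin 3) :=
  (WithLp.equiv 2 (Fin 3 → ℝ)).symm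
    ![a 1 * b 2 - a 2 * b 1, a 2 * b 0 - a 0 * b 2, a 0 * b 1 - a 1 * b 0]

/-- The vector (x, y, z) ∈ ℝ³. -/
noncomputable def v3 (x y z : ℝ) : EuclideanSpace ℝ (Fin 3) :=
  (WithLp.equiv 2 (Fin 3 → ℝ)).symm ![x, y, z]

/-!
For a central force `r̈ = k r` the angular momentum `r × ṙ` has derivative `ṙ × ṙ + r × (k r) = 0`,
so it vanishes on all of `I` once it vanishes at `t₀`. Then `ṙ` is parallel to `r`, by
`r × (r × ṙ) = ⟪r, ṙ⟫ r - |r|² ṙ`, and that is exactly the condition for the derivative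
`|r|⁻¹ ṙ - ⟪r, ṙ⟫ |r|⁻³ r` of `r / |r|` to vanish.
-/

theorem IsOpen.is_const_of_hasDerivAt_zero {E : Type*} [NormedAddCommGroup E] [NormedSpace ℝ E]
    {I : Set ℝ} (hI : IsOpen I) (hI' : IsPreconnected I) {f : ℝ → E}
    (hf : ∀ t ∈ I, HasDerivAt f 0 t) {x y : ℝ} (hx : x ∈ I) (hy : y ∈ I) : f x = f y :=
  hI.is_const_of_deriv_eq_zero hI' (fun t ht => (hf t ht).differentiableAt.differentiableWithinAt)
    (fun t ht => (hf t ht).deriv) hx hy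

section Normalize

variable {F : Type*} [NormedAddCommGroup F] [InnerProductSpace ℝ F] {r : ℝ → F} {v : F} {t : ℝ}

theorem HasDerivAt.norm (hr : HasDerivAt r v t) (h0 : r t ≠ 0) :
    HasDerivAt (fun s => ‖r s‖) (⟪r t, v⟫_ℝ / ‖r t‖) t := by
  have hpos : 0 < ‖r t‖ := norm_pos_iff.2 h0
  convert hr.norm_sq.sqrt (by positivity) using 1
  · simp only [Real.sqrt_sq (norm_nonneg _)]
  · rw [Real.sqrt_sq hpos.le]
    field_simp

theorem HasDerivAt.norm_inv_smul (hr : HasDerivAt r v t) (h0 : r t ≠ 0) :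
    HasDerivAt (fun s => ‖r s‖⁻¹ • r s) (‖r t‖⁻¹ • v - (⟪r t, v⟫_ℝ / ‖r t‖ ^ 3) • r t) t := by
  have hn : ‖r t‖ ≠ 0 := norm_ne_zero_iff.2 h0
  refine (((hr.norm h0).inv hn).smul hr).congr_deriv ?_
  rw [sub_eq_add_neg, ← neg_smul]
  congr 2
  field_simp

theorem HasDerivAt.norm_inv_smul_of_parallel (hr : HasDerivAt r v t) (h0 : r t ≠ 0)
    (hpar : ‖r t‖ ^ 2 • v = ⟪r t, v⟫_ℝ • r t) :
    HasDerivAt (fun s => ‖r s‖⁻¹ • r s) 0 t := by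
  have hn : ‖r t‖ ≠ 0 := norm_ne_zero_iff.2 h0
  refine (hr.norm_inv_smul h0).congr_deriv ?_
  rw [sub_eq_zero, div_eq_inv_mul, ← smul_smul, ← hpar, smul_smul]
  congr 1
  field_simp

end Normalize

theorem real_inner_eq_dotProduct {ι : Type*} [Fintype ι] (a b : EuclideanSpace ℝ ι) :
    ⟪a, b⟫_ℝ = dotProduct a.ofLp b.ofLp := by
  rw [EuclideanSpace.inner_eq_star_dotProduct, star_trivial, dotProduct_comm]

section Cross

local notation "ℝ³" => EuclideanSpace ℝ (Fin 3)

theorem cross3_eq_toLp_cross (a b : ℝ³) :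
    cross3 a b = WithLp.toLp 2 (crossProduct a.ofLp b.ofLp) :=
  rfl

theorem cross3_self (a : ℝ³) : cross3 a a = 0 := by
  rw [cross3_eq_toLp_cross, cross_self, WithLp.toLp_zero]

theorem cross3_zero_right (a : ℝ³) : cross3 a 0 = 0 := by
  rw [cross3_eq_toLp_cross, WithLp.ofLp_zero, map_zero, WithLp.toLp_zero]

theorem cross3_smul_right (a b : ℝ³) (c : ℝ) : cross3 a (c • b) = c • cross3 a b := by
  rw [cross3_eq_toLp_cross, cross3_eq_toLp_cross, WithLp.ofLp_smul, map_smul, WithLp.toLp_smul]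

theorem cross3_cross3_self_left (a b : ℝ³) :
    cross3 a (cross3 a b) = ⟪a, b⟫_ℝ • a - ‖a‖ ^ 2 • b := by
  rw [← real_inner_self_eq_norm_sq, real_inner_eq_dotProduct, real_inner_eq_dotProduct,
    cross3_eq_toLp_cross, cross3_eq_toLp_cross, WithLp.ofLp_toLp, cross_cross_eq_smul_sub_smul']
  rfl

theorem norm_sq_smul_eq_inner_smul_of_cross3_eq_zero {a b : ℝ³} (h : cross3 a b = 0) :
    ‖a‖ ^ 2 • b = ⟪a, b⟫_ℝ • a := by
  have := cross3_cross3_self_left a b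
  rwa [h, cross3_zero_right, eq_comm, sub_eq_zero, eq_comm] at this

noncomputable def cross3L : ℝ³ →L[ℝ] ℝ³ →L[ℝ] ℝ³ :=
  let e := WithLp.linearEquiv 2 ℝ (Fin 3 → ℝ)
  LinearMap.toContinuousLinearMap (LinearMap.toContinuousLinearMap.toLinearMap ∘ₗ
    (crossProduct.compl₁₂ e.toLinearMap e.toLinearMap).compr₂ e.symm.toLinearMap)

theorem HasDerivAt.cross3 {u v : ℝ → ℝ³} {u' v' : ℝ³} {t : ℝ} (hu : HasDerivAt u u' t)
    (hv : HasDerivAt v v' t) :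
    HasDerivAt (fun s => cross3 (u s) (v s)) (cross3 (u t) v' + cross3 u' (v t)) t :=
  cross3L.hasDerivAt_of_bilinear (fun _ => hu) (fun _ => hv)

theorem hasDerivAt_cross3_of_central {r r' : ℝ → ℝ³} {k t : ℝ} (hr : HasDerivAt r (r' t) t)
    (hr' : HasDerivAt r' (k • r t) t) : HasDerivAt (fun s => cross3 (r s) (r' s)) 0 t := by
  refine (hr.cross3 hr').congr_deriv ?_
  rw [cross3_smul_right, cross3_self, cross3_self, smul_zero, add_zero]

end Cross

theorem degenerate_rectilinear_case_general
(μ : ℝ) (I : Set ℝ) (hIopen : IsOpen I) (hIconn : I.OrdConnected)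
    (r : ℝ → EuclideanSpace ℝ (Fin 3))
    (hdiff : ∀ t ∈ I, DifferentiableAt ℝ r t)
    (hdiff' : ∀ t ∈ I, DifferentiableAt ℝ (deriv r) t)
    (hne : ∀ t ∈ I, r t ≠ 0)
    (hode : ∀ t ∈ I, deriv (deriv r) t = -(μ / ‖r t‖ ^ 3) • r t)
    (t₀ : ℝ) (ht₀ : t₀ ∈ I) (hh : cross3 (r t₀) (deriv r t₀) = 0) :
    (∀ t ∈ I, ‖r t‖⁻¹ • r t = ‖r t₀‖⁻¹ • r t₀) ∧
    (∀ t ∈ I, μ⁻¹ • cross3 (deriv r t) (cross3 (r t) (deriv r t)) - ‖r t‖⁻¹ • r t =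
        -(‖r t‖⁻¹ • r t)) ∧
    (∀ t ∈ I, ∃ c : ℝ, r t = c • (‖r t₀‖⁻¹ • r t₀)) := by
  have hI := hIconn.isPreconnected
  have hr : ∀ t ∈ I, HasDerivAt r (deriv r t) t := fun t ht => (hdiff t ht).hasDerivAt
  have hr' : ∀ t ∈ I, HasDerivAt (deriv r) (-(μ / ‖r t‖ ^ 3) • r t) t := fun t ht =>
    hode t ht ▸ (hdiff' t ht).hasDerivAt
  have hL : ∀ t ∈ I, cross3 (r t) (deriv r t) = 0 := fun t ht =>
    (hIopen.is_const_of_hasDerivAt_zero hI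
      (fun s hs => hasDerivAt_cross3_of_central (hr s hs) (hr' s hs)) ht ht₀).trans hh
  have hdir : ∀ t ∈ I, ‖r t‖⁻¹ • r t = ‖r t₀‖⁻¹ • r t₀ := fun t ht =>
    hIopen.is_const_of_hasDerivAt_zero hI (fun s hs => (hr s hs).norm_inv_smul_of_parallel
      (hne s hs) (norm_sq_smul_eq_inner_smul_of_cross3_eq_zero (hL s hs))) ht ht₀
  refine ⟨hdir, fun t ht => ?_, fun t ht => ⟨‖r t‖, ?_⟩⟩
  · rw [hL t ht, cross3_zero_right, smul_zero, zero_sub]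
  · rw [← hdir t ht, smul_smul, mul_inv_cancel₀ (norm_ne_zero_iff.2 (hne t ht)), one_smul]

/-- Degenerate (rectilinear) case: if h(t₀) = 0 for some t₀ ∈ I, then r(t)/|r(t)| is
constant on I; equivalently e(t) = −r(t)/|r(t)| on I and the trajectory is contained in
the line through the origin with direction r(t₀)/|r(t₀)|. -/
theorem degenerate_rectilinear_case
(μ : ℝ) (hμ : 0 < μ) (I : Set ℝ) (hIopen : IsOpen I) (hIconn : I.OrdConnected)
    (r : ℝ → EuclideanSpace ℝ (Fin 3))
    (hdiff : ∀ t ∈ I, DifferentiableAt ℝ r t)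
    (hdiff' : ∀ t ∈ I, DifferentiableAt ℝ (deriv r) t)
    (hne : ∀ t ∈ I, r t ≠ 0)
    (hode : ∀ t ∈ I, deriv (deriv r) t = -(μ / ‖r t‖ ^ 3) • r t)
    (t₀ : ℝ) (ht₀ : t₀ ∈ I) (hh : cross3 (r t₀) (deriv r t₀) = 0) :
    (∀ t ∈ I, ‖r t‖⁻¹ • r t = ‖r t₀‖⁻¹ • r t₀) ∧
    (∀ t ∈ I, μ⁻¹ • cross3 (deriv r t) (cross3 (r t) (deriv r t)) - ‖r t‖⁻¹ • r t =
        -(‖r t‖⁻¹ • r t)) ∧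
    (∀ t ∈ I, ∃ c : ℝ, r t = c • (‖r t₀‖⁻¹ • r t₀)) :=
  degenerate_rectilinear_case_general μ I hIopen hIconn r hdiff hdiff' hne hode t₀ ht₀ hh
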